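/- arXiv:2209.01674 — 8 statements merged into one kernel-verified Lean document; each statement's English description precedes it below -/
import Mathlib

section
/- Every polynomial p(x) of degree at most n with real coefficients can be written uniquely as p(x) = a(x) + x·b(x), where a(x) and b(x) are real polynomials of degrees at most n and n−1 respectively, a(x) is symmetric with center of symmetry n/2 (i.e., x^n·a(1/x) = a(x)), and b(x) is symmetric with center of symmetry (n−1)/2 (i.e., x^(n−1)·b(1/x) = b(x)). -/
open Polynomial

/-- A polynomial is symmetric with center of symmetry `n/2`:
its coefficients satisfy `c_i = c_{n-i}` for `0 ≤ i ≤ n`. -/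
def SymmAbout (p : Polynomial ℝ) (n : ℕ) : Prop :=
  ∀ i ≤ n, p.coeff i = p.coeff (n - i)

lemma symmAbout_iff_reflect (q : Polynomial ℝ) (n : ℕ) :
    SymmAbout q n ↔ reflect n q = q := by
  constructor
  · intro h
    ext i
    rcases le_or_gt i n with hi | hi
    · rw [coeff_reflect, revAt_le hi, ← h i hi]
    · rw [coeff_reflect, revAt_eq_self_of_lt hi]
  · intro h i hi
    conv_lhs => rw [← h]
    rw [coeff_reflect, revAt_le hi]

lemma reflect_reflect' (q : Polynomial ℝ) (n : ℕ) :
    reflect n (reflect n q) = q := by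
  ext i
  rw [coeff_reflect, coeff_reflect, revAt_invol]

lemma natDegree_reflect_le {q : Polynomial ℝ} {n : ℕ} (h : q.natDegree ≤ n) :
    (reflect n q).natDegree ≤ n := by
  apply natDegree_le_iff_coeff_eq_zero.2
  intro i hi
  rw [coeff_reflect, revAt_eq_self_of_lt hi]
  exact coeff_eq_zero_of_natDegree_lt (lt_of_le_of_lt h hi)

lemma eval_one_reflect {q : Polynomial ℝ} {n : ℕ} (h : q.natDegree ≤ n) :
    (reflect n q).eval 1 = q.eval 1 := by
  rw [eval_eq_sum_range' (Nat.lt_succ_of_le (natDegree_reflect_le h)),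
    eval_eq_sum_range' (Nat.lt_succ_of_le h)]
  simp only [one_pow, mul_one]
  have h2 : ∀ i ∈ Finset.range (n + 1), (reflect n q).coeff i = q.coeff (n - i) := by
    intro i hi
    rw [coeff_reflect, revAt_le (Nat.lt_succ_iff.1 (Finset.mem_range.1 hi))]
  rw [Finset.sum_congr rfl h2]
  simpa using Finset.sum_range_reflect (fun i => q.coeff i) (n + 1)

/-- Every real polynomial of degree at most `n` can be written uniquely as
`p = a + X * b` with `a` of degree at most `n`, symmetric with center `n/2`,
and `b` of degree at most `n-1`, symmetric with center `(n-1)/2`. -/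
theorem symmetric_decomposition_exists_unique (n : ℕ) (p : Polynomial ℝ)
    (hp : p.natDegree ≤ n) :
    ∃! ab : Polynomial ℝ × Polynomial ℝ,
      p = ab.1 + X * ab.2 ∧
      ab.1.natDegree ≤ n ∧ ab.2.natDegree ≤ n - 1 ∧
      SymmAbout ab.1 n ∧ SymmAbout ab.2 (n - 1) := by
  rcases Nat.eq_zero_or_pos n with rfl | hn
  · -- case n = 0 : p is a constant, (a, b) = (p, 0)
    refine ⟨(p, 0), ⟨by ring, hp, by simp, ?_, ?_⟩, ?_⟩
    · intro i hi; interval_cases i; rfl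
    · intro i hi; interval_cases i; rfl
    · rintro ⟨a, b⟩ ⟨hpab, ha, hb, -, -⟩
      simp only at hpab ha hb
      have hb0 : b = 0 := by
        have h1 : b.coeff 0 = 0 := by
          have := congrArg (fun q => Polynomial.coeff q 1) hpab
          simp only [coeff_add, coeff_X_mul] at this
          rw [coeff_eq_zero_of_natDegree_lt (lt_of_le_of_lt hp one_pos),
            coeff_eq_zero_of_natDegree_lt (lt_of_le_of_lt ha one_pos)] at this
          linarith
        rw [eq_C_of_natDegree_le_zero hb, h1, map_zero]
      subst hb0
      rw [mul_zero, add_zero] at hpab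
      simp [hpab]
  · -- case n ≥ 1
    obtain ⟨m, rfl⟩ : ∃ m, n = m + 1 := ⟨n - 1, (Nat.succ_pred_eq_of_pos hn).symm⟩
    have hn1 : m + 1 - 1 = m := rfl
    set q : Polynomial ℝ := p - reflect (m + 1) p with hq
    have hroot : IsRoot q 1 := by
      simp only [IsRoot, hq, eval_sub, eval_one_reflect hp, sub_self]
    set b : Polynomial ℝ := q /ₘ (X - C 1) with hbdef
    have hqb : (X - 1) * b = q := by
      rw [show (X - 1 : Polynomial ℝ) = X - C 1 by rw [map_one]]
      exact mul_divByMonic_eq_iff_isRoot.2 hroot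
    have hqdeg : q.natDegree ≤ m + 1 :=
      le_trans (natDegree_sub_le _ _) (max_le hp (natDegree_reflect_le hp))
    have hbdeg : b.natDegree ≤ m := by
      rw [hbdef, natDegree_divByMonic q (monic_X_sub_C 1), natDegree_X_sub_C]
      omega
    have hXne : (X - 1 : Polynomial ℝ) ≠ 0 := by
      rw [show (X - 1 : Polynomial ℝ) = X - C 1 by rw [map_one]]
      exact X_sub_C_ne_zero 1
    -- reflect (m+1) q = -q
    have hrq : reflect (m + 1) q = -q := by
      rw [hq, reflect_sub, reflect_reflect']
      ring
    have hXC : ((X : Polynomial ℝ) - 1).natDegree ≤ 1 := by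
      rw [show (X - 1 : Polynomial ℝ) = X - C 1 by rw [map_one]]
      exact le_of_eq (natDegree_X_sub_C 1)
    have hrefl_prod : reflect (m + 1) ((X - 1) * b) = (1 - X) * reflect m b := by
      have h := reflect_mul (X - 1) b hXC hbdeg
      rw [Nat.add_comm 1 m] at h
      rw [h]
      congr 1
      ext i
      rw [coeff_reflect]
      rcases i with _ | _ | i
      · simp [coeff_one]
      · simp [coeff_one]
      · rw [revAt_eq_self_of_lt (by omega)]
        simp only [coeff_sub, coeff_one, coeff_X_of_ne_one (by omega : i + 1 + 1 ≠ 1)]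
        norm_num
    have hbsymm : reflect m b = b := by
      have h1 : (1 - X) * reflect m b = -((X - 1) * b) := by
        rw [← hrefl_prod, hqb, hrq]
      have h2 : (X - 1) * (reflect m b - b) = 0 := by linear_combination -h1
      rcases mul_eq_zero.1 h2 with h | h
      · exact absurd h hXne
      · exact sub_eq_zero.1 h
    set a : Polynomial ℝ := p - X * b with hadef
    have hreflX : reflect 1 (X : Polynomial ℝ) = 1 := by
      have h : reflect 1 ((X : Polynomial ℝ) ^ 1) = X ^ revAt 1 1 := reflect_monomial 1 1
      simp [revAt] at h
      simpa using h
    have hreflXb : ∀ c : Polynomial ℝ, c.natDegree ≤ m → reflect m c = c →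
        reflect (m + 1) (X * c) = c := by
      intro c hc hrc
      have h := reflect_mul X c natDegree_X_le hc
      rw [Nat.add_comm 1 m] at h
      rw [h, hreflX, hrc, one_mul]
    have hasymm : reflect (m + 1) a = a := by
      rw [hadef, reflect_sub, hreflXb b hbdeg hbsymm]
      have h : p - reflect (m + 1) p = (X - 1) * b := hqb.symm
      linear_combination -h
    have hXbdeg : (X * b).natDegree ≤ m + 1 := by
      calc (X * b).natDegree ≤ X.natDegree + b.natDegree := natDegree_mul_le
        _ ≤ 1 + m := by gcongr; exact natDegree_X_le
        _ = m + 1 := by omega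
    have hadeg : a.natDegree ≤ m + 1 :=
      le_trans (natDegree_sub_le _ _) (max_le hp hXbdeg)
    refine ⟨(a, b), ⟨by rw [hadef]; ring, hadeg, by rw [hn1]; exact hbdeg,
      (symmAbout_iff_reflect a (m + 1)).2 hasymm,
      by rw [hn1]; exact (symmAbout_iff_reflect b m).2 hbsymm⟩, ?_⟩
    rintro ⟨a', b'⟩ ⟨hpab, ha', hb', hsa', hsb'⟩
    simp only at hpab ha' hb' hsa' hsb'
    rw [hn1] at hb' hsb'
    have hra' := (symmAbout_iff_reflect a' (m + 1)).1 hsa'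
    have hrb' := (symmAbout_iff_reflect b' m).1 hsb'
    have hkey : reflect (m + 1) p = a' + b' := by
      rw [hpab, reflect_add, hra', hreflXb b' hb' hrb']
    have hqb' : (X - 1) * b' = q := by
      rw [hq, hkey, hpab]; ring
    have hbb' : b' = b := by
      have h2 : (X - 1) * (b' - b) = 0 := by
        rw [mul_sub, hqb, hqb', sub_self]
      rcases mul_eq_zero.1 h2 with h | h
      · exact absurd h hXne
      · exact sub_eq_zero.1 h
    have haa' : a' = a := by
      rw [hadef, hpab, hbb']; ring
    rw [haa', hbb']
end

section
/- If a polynomial p(x) of degree at most n has a symmetric decomposition p(x) = a(x) + x·b(x) with respect to n in which both a(x) and b(x) have nonnegative and unimodal coefficient sequences, then p(x) itself is unimodal with a peak at position ⌊(n+1)/2⌋. -/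
open Polynomial

/-- Nonnegative coefficients. -/
def NonnegCoeffs (p : Polynomial ℝ) : Prop := ∀ i, 0 ≤ p.coeff i

/-- The coefficient sequence `a_0, …, a_n` is unimodal with a peak at position `k`. -/
def UnimodalWithPeak (p : Polynomial ℝ) (k n : ℕ) : Prop :=
  (∀ i j, i ≤ j → j ≤ k → p.coeff i ≤ p.coeff j) ∧
  (∀ i j, k ≤ i → i ≤ j → j ≤ n → p.coeff j ≤ p.coeff i)

/-- Unimodal coefficient sequence (some peak). -/
def UnimodalPoly (p : Polynomial ℝ) (n : ℕ) : Prop := ∃ k ≤ n, UnimodalWithPeak p k n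

/-- A symmetric unimodal sequence is nondecreasing up to the center and
nonincreasing after the center. -/
lemma symm_uni_aux (q : Polynomial ℝ) (n : ℕ) (hs : SymmAbout q n) (hu : UnimodalPoly q n) :
    (∀ i j, i ≤ j → 2 * j ≤ n + 1 → q.coeff i ≤ q.coeff j) ∧
    (∀ i j, n ≤ 2 * i + 1 → i ≤ j → j ≤ n → q.coeff j ≤ q.coeff i) := by
  obtain ⟨k, hk, hk1, hk2⟩ := hu
  constructor
  · intro i j hij hj
    rcases eq_or_lt_of_le hij with rfl | hij'
    · exact le_refl _
    by_cases hjk : j ≤ k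
    · exact hk1 i j hij hjk
    · push_neg at hjk
      rw [hs i (by omega)]
      exact hk2 j (n - i) (by omega) (by omega) (by omega)
  · intro i j hi hij hjn
    rcases eq_or_lt_of_le hij with rfl | hij'
    · exact le_refl _
    by_cases hik : k ≤ i
    · exact hk2 i j hik hij hjn
    · push_neg at hik
      rw [hs j hjn, hs i (by omega)]
      exact hk1 (n - j) (n - i) (by omega) (by omega)

/-- If `p = a + X·b` is the symmetric decomposition of `p` with respect to `n`
and both `a` and `b` have nonnegative and unimodal coefficients, then `p` is
unimodal with a peak at position `⌊(n+1)/2⌋`. -/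
theorem unimodal_of_nonneg_unimodal_symmetric_decomposition (n : ℕ)
    (p a b : Polynomial ℝ)
    (hdec : p = a + X * b)
    (hadeg : a.natDegree ≤ n) (hbdeg : b.natDegree ≤ n - 1)
    (hasym : SymmAbout a n) (hbsym : SymmAbout b (n - 1))
    (hapos : NonnegCoeffs a) (hbpos : NonnegCoeffs b)
    (hauni : UnimodalPoly a n) (hbuni : UnimodalPoly b (n - 1)) :
    UnimodalWithPeak p ((n + 1) / 2) n := by
  have hcoeff : ∀ i, p.coeff i = a.coeff i + (X * b).coeff i := by
    intro i; rw [hdec]; simp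
  have hxb0 : (X * b).coeff 0 = 0 := by simp
  have hxb : ∀ i, (X * b).coeff (i + 1) = b.coeff i := fun i => coeff_X_mul b i
  obtain ⟨ha1, ha2⟩ := symm_uni_aux a n hasym hauni
  obtain ⟨hb1, hb2⟩ := symm_uni_aux b (n - 1) hbsym hbuni
  constructor
  · intro i j hij hj
    rw [hcoeff i, hcoeff j]
    have haij := ha1 i j hij (by omega)
    have hbij : (X * b).coeff i ≤ (X * b).coeff j := by
      rcases Nat.eq_zero_or_pos j with rfl | hj0
      · have : i = 0 := by omega
        subst this; exact le_refl _
      rcases Nat.eq_zero_or_pos i with rfl | hi0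
      · obtain ⟨j', rfl⟩ : ∃ j', j = j' + 1 := ⟨j - 1, by omega⟩
        rw [hxb0, hxb]; exact hbpos j'
      · obtain ⟨i', rfl⟩ : ∃ i', i = i' + 1 := ⟨i - 1, by omega⟩
        obtain ⟨j', rfl⟩ : ∃ j', j = j' + 1 := ⟨j - 1, by omega⟩
        rw [hxb, hxb]
        exact hb1 i' j' (by omega) (by omega)
    linarith
  · intro i j hi hij hjn
    rw [hcoeff i, hcoeff j]
    have haij := ha2 i j (by omega) hij hjn
    have hbij : (X * b).coeff j ≤ (X * b).coeff i := by
      rcases Nat.eq_zero_or_pos i with rfl | hi0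
      · have : j = 0 := by omega
        subst this; exact le_refl _
      · obtain ⟨i', rfl⟩ : ∃ i', i = i' + 1 := ⟨i - 1, by omega⟩
        obtain ⟨j', rfl⟩ : ∃ j', j = j' + 1 := ⟨j - 1, by omega⟩
        rw [hxb, hxb]
        exact hb2 i' j' (by omega) (by omega) (by omega)
    linarith
end

section
/- The product of two polynomials, each with nonnegative, symmetric, and unimodal coefficient sequences (with centers of symmetry m/2 and n/2 respectively), has nonnegative, symmetric, and unimodal coefficients with center of symmetry (m+n)/2. -/
open Polynomial

noncomputable def extc (p : Polynomial ℝ) : ℤ → ℝ := fun i => if 0 ≤ i then p.coeff i.toNat else 0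

lemma extc_ofNat (p : Polynomial ℝ) (k : ℕ) : extc p (k : ℤ) = p.coeff k := by
  simp [extc]

lemma extc_neg (p : Polynomial ℝ) {i : ℤ} (h : i < 0) : extc p i = 0 := by
  simp [extc, not_le.2 h]

lemma extc_nonneg {p : Polynomial ℝ} (hp : NonnegCoeffs p) (i : ℤ) : 0 ≤ extc p i := by
  unfold extc; split
  · exact hp _
  · exact le_refl 0

lemma extc_gt {p : Polynomial ℝ} {m : ℕ} (hdeg : p.natDegree ≤ m) {i : ℤ}
    (h : (m : ℤ) < i) : extc p i = 0 := by
  have h0 : (0:ℤ) ≤ i := by omega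
  have : p.natDegree < i.toNat := by omega
  simp [extc, h0, Polynomial.coeff_eq_zero_of_natDegree_lt this]

lemma extc_symm {p : Polynomial ℝ} {m : ℕ} (hdeg : p.natDegree ≤ m)
    (hs : SymmAbout p m) (i : ℤ) : extc p i = extc p ((m : ℤ) - i) := by
  rcases lt_trichotomy i 0 with h | h | h
  · rw [extc_neg p h, extc_gt hdeg (by omega)]
  · subst h; simp [extc, hs 0 (Nat.zero_le m)]
  · rcases le_or_gt i (m : ℤ) with h2 | h2
    · have hi : i = ((i.toNat : ℕ) : ℤ) := by omega
      have hmi : (m:ℤ) - i = (((m - i.toNat : ℕ)) : ℤ) := by omega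
      rw [hmi, hi, extc_ofNat, extc_ofNat]
      exact hs i.toNat (by omega)
    · rw [extc_gt hdeg h2, extc_neg p (by omega)]

lemma mono_nat {p : Polynomial ℝ} {m : ℕ} (hs : SymmAbout p m)
    (huni : UnimodalPoly p m) {i j : ℕ} (hij : i ≤ j) (hj : 2 * j ≤ m) :
    p.coeff i ≤ p.coeff j := by
  obtain ⟨k, hk, hinc, hdec⟩ := huni
  rcases le_or_gt j k with hjk | hjk
  · exact hinc i j hij hjk
  · have e1 : p.coeff i = p.coeff (m - i) := hs i (by omega)
    have e2 : p.coeff j = p.coeff (m - j) := hs j (by omega)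
    rw [e1, e2]
    exact hdec (m - j) (m - i) (by omega) (by omega) (by omega)

lemma extc_mono {p : Polynomial ℝ} {m : ℕ} (hdeg : p.natDegree ≤ m)
    (hpos : NonnegCoeffs p) (hs : SymmAbout p m) (huni : UnimodalPoly p m)
    {i j : ℤ} (hij : i ≤ j) (hsum : i + j ≤ (m : ℤ)) :
    extc p i ≤ extc p j := by
  rcases lt_or_ge j 0 with hj | hj
  · rw [extc_neg p hj, extc_neg p (by omega)]
  rcases lt_or_ge (m : ℤ) j with hj2 | hj2
  · rw [extc_gt hdeg hj2, extc_neg p (by omega)]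
  rcases lt_or_ge i 0 with hi | hi
  · rw [extc_neg p hi]; exact extc_nonneg hpos j
  -- 0 ≤ i ≤ j ≤ m
  have hi' : i = ((i.toNat : ℕ) : ℤ) := by omega
  have hj' : j = ((j.toNat : ℕ) : ℤ) := by omega
  rcases le_or_gt (2 * j) (m : ℤ) with h2j | h2j
  · rw [hi', hj', extc_ofNat, extc_ofNat]
    exact mono_nat hs huni (by omega) (by omega)
  · have e2 : extc p j = extc p ((m : ℤ) - j) := extc_symm hdeg hs j
    rw [e2]
    have hmj : (m : ℤ) - j = (((m - j.toNat : ℕ)) : ℤ) := by omega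
    rw [hi', hmj, extc_ofNat, extc_ofNat]
    exact mono_nat hs huni (by omega) (by omega)

lemma conv {p q : Polynomial ℝ} {m : ℕ} (hpdeg : p.natDegree ≤ m) (k : ℕ) :
    (p * q).coeff k = ∑ t ∈ Finset.range (m + 1), extc p (t : ℤ) * extc q ((k : ℤ) - t) := by
  have h1 : (p * q).coeff k = ∑ i ∈ Finset.range (k + 1), p.coeff i * q.coeff (k - i) := by
    rw [Polynomial.coeff_mul, Finset.Nat.sum_antidiagonal_eq_sum_range_succ_mk]
  have h2 : ∀ i ∈ Finset.range (k + 1),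
      p.coeff i * q.coeff (k - i) = extc p (i : ℤ) * extc q ((k : ℤ) - i) := by
    intro i hi
    simp only [Finset.mem_range] at hi
    have : ((k : ℤ) - i) = (((k - i : ℕ)) : ℤ) := by omega
    rw [this, extc_ofNat, extc_ofNat]
  rw [h1, Finset.sum_congr rfl h2]
  set F : ℕ → ℝ := fun t => extc p (t : ℤ) * extc q ((k : ℤ) - t) with hF
  have big : ∀ N, k + 1 ≤ N → m + 1 ≤ N →
      (∑ t ∈ Finset.range N, F t) = ∑ t ∈ Finset.range N, F t := fun _ _ _ => rfl
  have e1 : (∑ t ∈ Finset.range (k + 1), F t)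
      = ∑ t ∈ Finset.range (max (k + 1) (m + 1)), F t := by
    apply Finset.sum_subset (Finset.range_subset_range.2 (le_max_left _ _))
    intro t ht hnt
    simp only [Finset.mem_range] at ht hnt
    have : ((k : ℤ) - t) < 0 := by omega
    simp [hF, extc_neg q this]
  have e2 : (∑ t ∈ Finset.range (m + 1), F t)
      = ∑ t ∈ Finset.range (max (k + 1) (m + 1)), F t := by
    apply Finset.sum_subset (Finset.range_subset_range.2 (le_max_right _ _))
    intro t ht hnt
    simp only [Finset.mem_range] at ht hnt
    have : (m : ℤ) < t := by omega
    simp [hF, extc_gt hpdeg this]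
  rw [e1, ← e2]

lemma prod_symm {p q : Polynomial ℝ} {m n : ℕ} (hpdeg : p.natDegree ≤ m)
    (hqdeg : q.natDegree ≤ n) (hpsym : SymmAbout p m) (hqsym : SymmAbout q n) :
    SymmAbout (p * q) (m + n) := by
  intro k hk
  rw [conv hpdeg k, conv hpdeg (m + n - k)]
  have hc : ((m + n - k : ℕ) : ℤ) = (m : ℤ) + n - k := by omega
  rw [hc]
  have hr := Finset.sum_range_reflect
    (fun t : ℕ => extc p (t : ℤ) * extc q ((m : ℤ) + n - k - t)) (m + 1)
  refine Eq.trans ?_ hr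
  apply Finset.sum_congr rfl
  intro t ht
  simp only [Finset.mem_range] at ht
  have h1 : ((m + 1 - 1 - t : ℕ) : ℤ) = (m : ℤ) - t := by omega
  rw [h1, ← extc_symm hpdeg hpsym (t : ℤ), extc_symm hqdeg hqsym ((k : ℤ) - t)]
  congr 2
  ring

lemma step {p q : Polynomial ℝ} {m n : ℕ} (hpdeg : p.natDegree ≤ m) (hqdeg : q.natDegree ≤ n)
    (hppos : NonnegCoeffs p) (hqpos : NonnegCoeffs q)
    (hpsym : SymmAbout p m) (hqsym : SymmAbout q n)
    (hpuni : UnimodalPoly p m) (hquni : UnimodalPoly q n)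
    (k : ℕ) (hk : 2 * k < m + n) :
    (p * q).coeff k ≤ (p * q).coeff (k + 1) := by
  have hA : (p * q).coeff (k + 1)
      = ∑ t ∈ Finset.range (m + 2), extc p (t : ℤ) * extc q ((k : ℤ) + 1 - t) := by
    rw [conv (hpdeg.trans (Nat.le_succ m)) (k + 1)]
    have hc : ((k + 1 : ℕ) : ℤ) = (k : ℤ) + 1 := by push_cast; ring
    rw [hc]
  have hB : (p * q).coeff k
      = ∑ t ∈ Finset.range (m + 2), extc p ((t : ℤ) - 1) * extc q ((k : ℤ) + 1 - t) := by
    rw [Finset.sum_range_succ'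
      (fun t : ℕ => extc p ((t : ℤ) - 1) * extc q ((k : ℤ) + 1 - t)) (m + 1), conv hpdeg k]
    have h0 : extc p (((0 : ℕ) : ℤ) - 1) = 0 := extc_neg p (by norm_num)
    rw [h0, zero_mul, add_zero]
    apply Finset.sum_congr rfl
    intro t ht
    have c1 : ((t + 1 : ℕ) : ℤ) - 1 = (t : ℤ) := by push_cast; ring
    have c2 : (k : ℤ) + 1 - ((t + 1 : ℕ) : ℤ) = (k : ℤ) - t := by push_cast; ring
    rw [c1, c2]
  have hD : (p * q).coeff (k + 1) - (p * q).coeff k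
      = ∑ t ∈ Finset.range (m + 2),
          (extc p (t : ℤ) - extc p ((t : ℤ) - 1)) * extc q ((k : ℤ) + 1 - t) := by
    rw [hA, hB, ← Finset.sum_sub_distrib]
    apply Finset.sum_congr rfl
    intro t ht
    ring
  have hRefl : (∑ t ∈ Finset.range (m + 2),
          (extc p (t : ℤ) - extc p ((t : ℤ) - 1)) * extc q ((k : ℤ) + 1 - t))
      = ∑ t ∈ Finset.range (m + 2),
          (extc p ((t : ℤ) - 1) - extc p (t : ℤ)) * extc q ((k : ℤ) - m + t) := by
    have hr := Finset.sum_range_reflect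
      (fun t : ℕ => (extc p (t : ℤ) - extc p ((t : ℤ) - 1)) * extc q ((k : ℤ) + 1 - t)) (m + 2)
    refine Eq.trans hr.symm ?_
    apply Finset.sum_congr rfl
    intro t ht
    simp only [Finset.mem_range] at ht
    have c1 : ((m + 2 - 1 - t : ℕ) : ℤ) = (m : ℤ) + 1 - t := by omega
    rw [c1]
    have e1 : extc p ((m : ℤ) + 1 - t) = extc p ((t : ℤ) - 1) := by
      rw [extc_symm hpdeg hpsym ((m : ℤ) + 1 - t)]
      congr 1
      ring
    have e2 : extc p ((m : ℤ) + 1 - t - 1) = extc p (t : ℤ) := by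
      rw [extc_symm hpdeg hpsym ((m : ℤ) + 1 - t - 1)]
      congr 1
      ring
    have e3 : (k : ℤ) + 1 - ((m : ℤ) + 1 - t) = (k : ℤ) - m + t := by ring
    rw [e1, e2, e3]
  have hsum : 0 ≤ ∑ t ∈ Finset.range (m + 2),
      ((extc p (t : ℤ) - extc p ((t : ℤ) - 1)) * extc q ((k : ℤ) + 1 - t)
        + (extc p ((t : ℤ) - 1) - extc p (t : ℤ)) * extc q ((k : ℤ) - m + t)) := by
    apply Finset.sum_nonneg
    intro t ht
    simp only [Finset.mem_range] at ht
    rcases le_or_gt (2 * (t : ℤ)) ((m : ℤ) + 1) with hcase | hcase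
    · have hE : 0 ≤ extc p (t : ℤ) - extc p ((t : ℤ) - 1) :=
        sub_nonneg.2 (extc_mono hpdeg hppos hpsym hpuni (by omega) (by omega))
      have hQ : extc q ((k : ℤ) - m + t) ≤ extc q ((k : ℤ) + 1 - t) :=
        extc_mono hqdeg hqpos hqsym hquni (by omega) (by omega)
      have key := mul_nonneg hE (sub_nonneg.2 hQ)
      nlinarith [key]
    · have hE : extc p (t : ℤ) ≤ extc p ((t : ℤ) - 1) := by
        rw [extc_symm hpdeg hpsym (t : ℤ), extc_symm hpdeg hpsym ((t : ℤ) - 1)]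
        exact extc_mono hpdeg hppos hpsym hpuni (by omega) (by omega)
      have hQ : extc q ((k : ℤ) + 1 - t) ≤ extc q ((k : ℤ) - m + t) :=
        extc_mono hqdeg hqpos hqsym hquni (by omega) (by omega)
      have key := mul_nonneg (sub_nonneg.2 hE) (sub_nonneg.2 hQ)
      nlinarith [key]
  have h2 := hD
  rw [hRefl] at h2
  have hsplit : (∑ t ∈ Finset.range (m + 2),
      ((extc p (t : ℤ) - extc p ((t : ℤ) - 1)) * extc q ((k : ℤ) + 1 - t)
        + (extc p ((t : ℤ) - 1) - extc p (t : ℤ)) * extc q ((k : ℤ) - m + t)))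
      = (∑ t ∈ Finset.range (m + 2),
          (extc p (t : ℤ) - extc p ((t : ℤ) - 1)) * extc q ((k : ℤ) + 1 - t))
        + ∑ t ∈ Finset.range (m + 2),
          (extc p ((t : ℤ) - 1) - extc p (t : ℤ)) * extc q ((k : ℤ) - m + t) :=
    Finset.sum_add_distrib
  linarith [hsum, hsplit, hD, h2]

/-- The product of two polynomials with nonnegative, symmetric and unimodal
coefficients (centers `m/2` and `n/2`) has nonnegative, symmetric and unimodal
coefficients with center `(m+n)/2`. -/
theorem mul_nonneg_symmetric_unimodal (m n : ℕ) (p q : Polynomial ℝ)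
    (hpdeg : p.natDegree ≤ m) (hqdeg : q.natDegree ≤ n)
    (hppos : NonnegCoeffs p) (hqpos : NonnegCoeffs q)
    (hpsym : SymmAbout p m) (hqsym : SymmAbout q n)
    (hpuni : UnimodalPoly p m) (hquni : UnimodalPoly q n) :
    NonnegCoeffs (p * q) ∧ SymmAbout (p * q) (m + n) ∧ UnimodalPoly (p * q) (m + n) := by
  have hpos : NonnegCoeffs (p * q) := by
    intro k
    rw [Polynomial.coeff_mul]
    exact Finset.sum_nonneg fun x _ => mul_nonneg (hppos _) (hqpos _)
  have hsym : SymmAbout (p * q) (m + n) := prod_symm hpdeg hqdeg hpsym hqsym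
  refine ⟨hpos, hsym, ?_⟩
  have hstep : ∀ k : ℕ, 2 * k < m + n → (p * q).coeff k ≤ (p * q).coeff (k + 1) :=
    step hpdeg hqdeg hppos hqpos hpsym hqsym hpuni hquni
  have hinc : ∀ j : ℕ, ∀ i ≤ j, 2 * j ≤ m + n + 1 → (p * q).coeff i ≤ (p * q).coeff j := by
    intro j
    induction j with
    | zero => intro i hi _; interval_cases i; exact le_refl _
    | succ j ih =>
      intro i hi hj
      rcases Nat.lt_or_ge i (j + 1) with h | h
      · exact le_trans (ih i (by omega) (by omega)) (hstep j (by omega))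
      · have : i = j + 1 := by omega
        rw [this]
  refine ⟨(m + n) / 2, by omega, ?_, ?_⟩
  · intro i j hij hj
    exact hinc j i hij (by omega)
  · intro i j hi hij hj
    have e1 : (p * q).coeff j = (p * q).coeff (m + n - j) := hsym j hj
    have e2 : (p * q).coeff i = (p * q).coeff (m + n - i) := hsym i (by omega)
    rw [e1, e2]
    exact hinc (m + n - i) (m + n - j) (by omega) (by omega)
end

section
/- The polynomials p_{n,k}(x) defined by the recurrence p_{n,k}(x) = x·Σ_{i=0}^{k−1} p_{n−1,i}(x) + Σ_{i=k}^{n} p_{n−1,i}(x) for n ≥ 1 and 0 ≤ k ≤ n, with initial condition p_{0,0}(x) = 1, satisfy the symmetry property p_{n,n−k}(x) = x^n · p_{n,k}(1/x) for all 0 ≤ k ≤ n. -/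
open Polynomial Finset

private lemma reflect_sum' {s : Finset ℕ} (N : ℕ) (g : ℕ → Polynomial ℝ) :
    Polynomial.reflect N (∑ i ∈ s, g i) = ∑ i ∈ s, Polynomial.reflect N (g i) := by
  classical
  induction s using Finset.induction with
  | empty => simp
  | insert _ _ h ih => simp [Finset.sum_insert h, Polynomial.reflect_add, ih]

private lemma reflect_succ' (m : ℕ) (q : Polynomial ℝ) (hq : q.natDegree ≤ m) :
    Polynomial.reflect (m + 1) q = X * Polynomial.reflect m q := by
  conv_lhs => rw [← one_mul q]
  rw [show m + 1 = 1 + m by omega,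
    Polynomial.reflect_mul _ _ (by simp : (1 : Polynomial ℝ).natDegree ≤ 1) hq,
    Polynomial.reflect_one, pow_one]

/-- The Brenti–Welker polynomials `p_{n,k}`, given by `p_{0,0} = 1`
(with `p_{n,k} = 0` for `k > n`) and the recurrence
`p_{n,k}(x) = x·Σ_{i=0}^{k-1} p_{n-1,i}(x) + Σ_{i=k}^{n} p_{n-1,i}(x)`,
satisfy the symmetry `p_{n,n-k}(x) = x^n · p_{n,k}(1/x)`
(expressed via `Polynomial.reflect n`). -/
theorem brentiWelker_symmetry (p : ℕ → ℕ → Polynomial ℝ)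
    (hinit : p 0 0 = 1)
    (hzero : ∀ n k, n < k → p n k = 0)
    (hrec : ∀ n, 1 ≤ n → ∀ k ≤ n,
      p n k = X * (∑ i ∈ Finset.range k, p (n - 1) i) +
        ∑ i ∈ Finset.Icc k n, p (n - 1) i) :
    ∀ n, ∀ k ≤ n, p n (n - k) = Polynomial.reflect n (p n k) := by
  -- degree bound
  have hdeg : ∀ n k, (p n k).natDegree ≤ n := by
    intro n
    induction n with
    | zero =>
      intro k
      rcases Nat.eq_zero_or_pos k with rfl | hk
      · simp [hinit]
      · simp [hzero 0 k hk]
    | succ m ih =>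
      intro k
      rcases le_or_gt k (m + 1) with hk | hk
      · rw [hrec (m + 1) (Nat.succ_le_succ (Nat.zero_le m)) k hk]
        simp only [Nat.add_sub_cancel]
        refine le_trans (natDegree_add_le _ _) (max_le ?_ ?_)
        · refine le_trans (natDegree_mul_le) ?_
          have h1 : (X : Polynomial ℝ).natDegree ≤ 1 := natDegree_X_le
          have h2 : (∑ i ∈ Finset.range k, p m i).natDegree ≤ m :=
            natDegree_sum_le_of_forall_le _ _ fun i _ => ih i
          omega
        · exact le_trans (natDegree_sum_le_of_forall_le _ _ fun i _ => ih i)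
            (Nat.le_succ m)
      · simp [hzero (m + 1) k hk]
  intro n
  induction n with
  | zero =>
    intro k hk
    interval_cases k
    simp [hinit]
  | succ m ih =>
    intro k hk
    have hm1 : 1 ≤ m + 1 := Nat.succ_le_succ (Nat.zero_le m)
    have htop : p m (m + 1) = 0 := hzero m (m + 1) (Nat.lt_succ_self m)
    -- RHS
    have hA : (∑ i ∈ Finset.range k, p m i).natDegree ≤ m :=
      natDegree_sum_le_of_forall_le _ _ fun i _ => hdeg m i
    have hB : (∑ i ∈ Finset.Icc k (m + 1), p m i).natDegree ≤ m :=
      natDegree_sum_le_of_forall_le _ _ fun i _ => hdeg m i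
    have hrefl : ∀ i ≤ m, Polynomial.reflect m (p m i) = p m (m - i) := by
      intro i hi; exact (ih i hi).symm
    have hRHS : Polynomial.reflect (m + 1) (p (m + 1) k) =
        (∑ i ∈ Finset.range k, p m (m - i)) +
          X * ∑ i ∈ Finset.Icc k m, p m (m - i) := by
      rw [hrec (m + 1) hm1 k hk]
      simp only [Nat.add_sub_cancel]
      rw [Polynomial.reflect_add]
      have e1 : Polynomial.reflect (m + 1) (X * ∑ i ∈ Finset.range k, p m i) =
          ∑ i ∈ Finset.range k, p m (m - i) := by
        rw [show m + 1 = 1 + m by omega,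
          Polynomial.reflect_mul _ _ natDegree_X_le hA, Polynomial.reflect_one_X,
          one_mul, reflect_sum']
        refine Finset.sum_congr rfl fun i hi => ?_
        exact hrefl i (by have := Finset.mem_range.mp hi; omega)
      have e2 : Polynomial.reflect (m + 1) (∑ i ∈ Finset.Icc k (m + 1), p m i) =
          X * ∑ i ∈ Finset.Icc k m, p m (m - i) := by
        rcases le_or_gt k (m + 1) with hk1 | hk1
        · rw [reflect_succ' _ _ hB, Finset.sum_Icc_succ_top hk1, htop, add_zero,
            reflect_sum']
          congr 1
          refine Finset.sum_congr rfl fun i hi => ?_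
          exact hrefl i (Finset.mem_Icc.mp hi).2
        · omega
      rw [e1, e2]
    rw [hRHS, hrec (m + 1) hm1 (m + 1 - k) (Nat.sub_le _ _)]
    simp only [Nat.add_sub_cancel]
    rw [Finset.sum_Icc_succ_top (by omega : m + 1 - k ≤ m + 1), htop, add_zero]
    have hb : (∑ i ∈ Finset.range k, p m (m - i)) =
        ∑ i ∈ Finset.Icc (m + 1 - k) m, p m i := by
      rw [← Nat.Ico_zero_eq_range,
        Finset.sum_Ico_reflect (fun i => p m i) 0 (by omega : k ≤ m + 1)]
      simp [Finset.Ico_add_one_right_eq_Icc]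
    have ha : (∑ i ∈ Finset.Icc k m, p m (m - i)) =
        ∑ i ∈ Finset.range (m + 1 - k), p m i := by
      rw [← Finset.Ico_add_one_right_eq_Icc,
        Finset.sum_Ico_reflect (fun i => p m i) k (le_refl (m + 1))]
      simp [Nat.Ico_zero_eq_range]
    rw [hb, ha, add_comm]
end

section
/- Let h_0, h_1, ..., h_n be real numbers with h_n = 0 and set θ_i = h_{n−1} + ... + h_{n−i} − h_0 − ... − h_{i−1} for 1 ≤ i ≤ n−1. Then the sequence θ_1, ..., θ_{n−1} is nonnegative and unimodal if and only if h_i ≤ h_{n−1−i} for all 0 ≤ i ≤ (n−1)/2. -/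
open Finset

/-- With `h_n = 0` and `θ_i = h_{n-1} + ⋯ + h_{n-i} − h_0 − ⋯ − h_{i-1}` for
`1 ≤ i ≤ n-1`, the sequence `θ_1, …, θ_{n-1}` is nonnegative and unimodal if
and only if `h_i ≤ h_{n-1-i}` for all `0 ≤ i ≤ (n-1)/2`. -/
theorem theta_nonneg_unimodal_iff_top_heavy (n : ℕ) (h : ℕ → ℝ) (hn : h n = 0)
    (θ : ℕ → ℝ)
    (hθ : ∀ i, 1 ≤ i → i ≤ n - 1 →
      θ i = (∑ j ∈ Finset.Icc (n - i) (n - 1), h j) - (∑ j ∈ Finset.range i, h j)) :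
    ((∀ i, 1 ≤ i → i ≤ n - 1 → 0 ≤ θ i) ∧
      ∃ k, (∀ i j, 1 ≤ i → i ≤ j → j ≤ k → j ≤ n - 1 → θ i ≤ θ j) ∧
        (∀ i j, 1 ≤ i → k ≤ i → i ≤ j → j ≤ n - 1 → θ j ≤ θ i))
    ↔ (∀ i, 2 * i ≤ n - 1 → h i ≤ h (n - 1 - i)) := by
  rcases Nat.lt_or_ge n 2 with hsmall | hn2
  · constructor
    · rintro - i hi
      have h1 : i = 0 := by omega
      have h2 : n - 1 - i = i := by omega
      rw [h2, h1]
    · intro _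
      refine ⟨fun i h1 h2 => absurd h2 (by omega),
        ⟨0, fun i j h1 h2 h3 h4 => absurd h3 (by omega),
          fun i j h1 h2 h3 h4 => absurd h4 (by omega)⟩⟩
  -- main case : n ≥ 2
  set S : ℕ → ℝ := fun m => ∑ j ∈ Finset.range m, h j with hS
  have hθ' : ∀ i, 1 ≤ i → i ≤ n - 1 → θ i = S n - S (n - i) - S i := by
    intro i h1 h2
    rw [hθ i h1 h2]
    have e : Finset.Icc (n - i) (n - 1) = Finset.Ico (n - i) n := by
      rw [← Finset.Ico_add_one_right_eq_Icc]
      congr 1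
      omega
    rw [e, Finset.sum_Ico_eq_sub _ (by omega : n - i ≤ n)]
  have hstep : ∀ m, 1 ≤ m → m + 1 ≤ n - 1 →
      θ (m + 1) - θ m = h (n - 1 - m) - h m := by
    intro m h1 h2
    rw [hθ' m h1 (by omega), hθ' (m + 1) (by omega) h2]
    have e1 : n - (m + 1) = n - 1 - m := by omega
    have e2 : n - m = (n - 1 - m) + 1 := by omega
    rw [e1, e2]
    simp only [hS]
    rw [Finset.sum_range_succ, Finset.sum_range_succ]
    ring
  have hsym : ∀ i, 1 ≤ i → i ≤ n - 1 → θ (n - i) = θ i := by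
    intro i h1 h2
    rw [hθ' i h1 h2, hθ' (n - i) (by omega) (by omega)]
    have e : n - (n - i) = i := by omega
    rw [e]
    ring
  have hθ1 : θ 1 = h (n - 1) - h 0 := by
    rw [hθ' 1 le_rfl (by omega)]
    have e : n = (n - 1) + 1 := by omega
    simp only [hS]
    rw [e, Finset.sum_range_succ, Finset.sum_range_one]
    have e2 : n - 1 + 1 - 1 = n - 1 := by omega
    rw [e2]
    ring
  constructor
  · rintro ⟨hnn, k, hinc, hdec⟩ i hi
    rcases Nat.eq_zero_or_pos i with rfl | hi1
    · have := hnn 1 le_rfl (by omega)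
      rw [hθ1] at this
      have e : n - 1 - 0 = n - 1 := by omega
      rw [e]
      linarith
    · by_contra hc
      push_neg at hc
      have hd := hstep i hi1 (by omega)
      rcases le_or_gt k i with hk | hk
      · have h1 := hdec (i + 1) (n - i) (by omega) (by omega) (by omega) (by omega)
        have h2 := hsym i hi1 (by omega)
        linarith
      · have h1 := hinc i (i + 1) hi1 (by omega) (by omega) (by omega)
        linarith
  · intro H
    have hup : ∀ i j, 1 ≤ i → i ≤ j → j ≤ (n - 1) / 2 + 1 → j ≤ n - 1 → θ i ≤ θ j := by
      intro i j h1 h2 h3 h4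
      induction j, h2 using Nat.le_induction with
      | base => exact le_refl _
      | succ m hm ih =>
        have ih' := ih (by omega) (by omega)
        have hd := hstep m (by omega) (by omega)
        have hH := H m (by omega)
        linarith
    have hdown : ∀ i j, 1 ≤ i → (n - 1) / 2 + 1 ≤ i → i ≤ j → j ≤ n - 1 → θ j ≤ θ i := by
      intro i j h1 h2 h3 h4
      induction j, h3 using Nat.le_induction with
      | base => exact le_refl _
      | succ m hm ih =>
        have ih' := ih (by omega)
        have hd := hstep m (by omega) (by omega)
        have hH := H (n - 1 - m) (by omega)
        have e : n - 1 - (n - 1 - m) = m := by omega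
        rw [e] at hH
        linarith
    have hθ1nn : 0 ≤ θ 1 := by
      rw [hθ1]
      have := H 0 (by omega)
      have e : n - 1 - 0 = n - 1 := by omega
      rw [e] at this
      linarith
    refine ⟨?_, ⟨(n - 1) / 2 + 1, hup, hdown⟩⟩
    intro i h1 h2
    rcases le_or_gt i ((n - 1) / 2 + 1) with hk | hk
    · have := hup 1 i le_rfl h1 hk h2
      linarith
    · have h3 := hdown i (n - 1) h1 (by omega) h2 le_rfl
      have h4 := hsym 1 le_rfl (by omega)
      linarith
end

section
/- Let h_0, ..., h_n be real numbers with h_n = 0, and define g_i = h_0 + h_1 + ... + h_i − h_n − h_{n−1} − ... − h_{n−i} for 0 ≤ i ≤ n−1. Then the sequence (g_0, ..., g_{n−1}) is symmetric (g_i = g_{n−1−i}) and it is unimodal if and only if h_i ≥ h_{n−i} for all 1 ≤ i ≤ ⌊n/2⌋. -/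
open Finset

/-- With `h_n = 0` and `g_i = h_0 + ⋯ + h_i − h_n − ⋯ − h_{n-i}` for
`0 ≤ i ≤ n-1`, the sequence `(g_0, …, g_{n-1})` is symmetric, and it is
unimodal if and only if `h_i ≥ h_{n-i}` for all `1 ≤ i ≤ ⌊n/2⌋`. -/
theorem boundary_h_symmetric_and_unimodal_iff (n : ℕ) (h : ℕ → ℝ) (hn : h n = 0)
    (g : ℕ → ℝ)
    (hg : ∀ i ≤ n - 1,
      g i = (∑ j ∈ Finset.range (i + 1), h j) - (∑ j ∈ Finset.Icc (n - i) n, h j)) :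
    (∀ i ≤ n - 1, g i = g (n - 1 - i)) ∧
    ((∃ k ≤ n - 1, (∀ i j, i ≤ j → j ≤ k → g i ≤ g j) ∧
        (∀ i j, k ≤ i → i ≤ j → j ≤ n - 1 → g j ≤ g i))
      ↔ (∀ i, 1 ≤ i → 2 * i ≤ n → h (n - i) ≤ h i)) := by
  rcases Nat.eq_zero_or_pos n with rfl | hn1
  · refine ⟨?_, ?_⟩
    · intro i hi
      have : i = 0 := by omega
      subst this; rfl
    · constructor
      · rintro - i hi1 hi2; omega
      · intro _
        refine ⟨0, le_refl 0, ?_, ?_⟩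
        · intro i j hij hj
          have : i = j := by omega
          rw [this]
        · intro i j hki hij hj
          have : i = j := by omega
          rw [this]
  -- n ≥ 1
  have key : ∀ a ≤ n, ∑ j ∈ range (a+1), h j + ∑ j ∈ Icc (a+1) n, h j
      = ∑ j ∈ range (n+1), h j := by
    intro a ha
    rw [range_eq_Ico, range_eq_Ico, ← Finset.Ico_add_one_right_eq_Icc]
    exact Finset.sum_Ico_consecutive h (by omega) (by omega)
  have sym : ∀ i ≤ n - 1, g i = g (n - 1 - i) := by
    intro i hi
    rw [hg i hi, hg (n - 1 - i) (by omega)]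
    have e1 : n - 1 - i + 1 = n - i := by omega
    have e2 : n - (n - 1 - i) = i + 1 := by omega
    rw [e1, e2]
    have k1 := key i (by omega)
    have k2 := key (n - i - 1) (by omega)
    have e3 : n - i - 1 + 1 = n - i := by omega
    rw [e3] at k2
    linarith
  have diff : ∀ i, 1 ≤ i → i ≤ n - 1 → g i - g (i - 1) = h i - h (n - i) := by
    intro i h1 h2
    rw [hg i h2, hg (i - 1) (by omega)]
    have e1 : i - 1 + 1 = i := by omega
    have e2 : n - (i - 1) = n - i + 1 := by omega
    rw [e1, e2]
    have s1 : ∑ j ∈ range (i+1), h j = ∑ j ∈ range i, h j + h i :=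
      Finset.sum_range_succ h i
    have s2 : ∑ j ∈ Icc (n - i) n, h j
        = h (n - i) + ∑ j ∈ Icc (n - i + 1) n, h j := by
      rw [← Finset.Ico_add_one_right_eq_Icc, ← Finset.Ico_add_one_right_eq_Icc]
      exact Finset.sum_eq_sum_Ico_succ_bot (by omega) h
    linarith
  refine ⟨sym, ?_⟩
  constructor
  · rintro ⟨k, hk, hup, hdown⟩ i hi1 hi2
    have hin : i ≤ n - 1 := by omega
    have d := diff i hi1 hin
    suffices hs : g (i - 1) ≤ g i by linarith
    rcases le_or_gt i k with hik | hik
    · exact hup (i - 1) i (by omega) hik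
    · -- k ≤ i - 1 ≤ n - 1 - i
      have s1 := sym i hin
      have s2 := sym (i - 1) (by omega : i - 1 ≤ n - 1)
      have e : n - 1 - (i - 1) = n - i := by omega
      rw [e] at s2
      have := hdown (n - 1 - i) (n - i) (by omega) (by omega) (by omega)
      linarith
  · intro hcond
    have step_up : ∀ i, 1 ≤ i → i ≤ n / 2 → g (i - 1) ≤ g i := by
      intro i h1 h2
      have d := diff i h1 (by omega)
      have := hcond i h1 (by omega)
      linarith
    have mono : ∀ d i, i + d ≤ n / 2 → g i ≤ g (i + d) := by
      intro d
      induction d with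
      | zero => intro i _; exact le_refl _
      | succ d ih =>
        intro i hi
        have h1 := ih i (by omega)
        have h2 := step_up (i + d + 1) (by omega) (by omega)
        have e : i + d + 1 - 1 = i + d := rfl
        rw [e] at h2
        calc g i ≤ g (i + d) := h1
          _ ≤ g (i + d + 1) := h2
    have up : ∀ i j, i ≤ j → j ≤ n / 2 → g i ≤ g j := by
      intro i j hij hj
      have := mono (j - i) i (by omega)
      rwa [show i + (j - i) = j from by omega] at this
    refine ⟨n / 2, by omega, up, ?_⟩
    intro i j hki hij hj
    have s1 := sym i (by omega : i ≤ n - 1)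
    have s2 := sym j hj
    have := up (n - 1 - j) (n - 1 - i) (by omega) (by omega)
    linarith
end

section
/- Suppose p(x) is a polynomial of degree at most n that can be written as a sum of three polynomials with nonnegative, symmetric, and unimodal coefficients with centers of symmetry (n−1)/2, n/2, and (n+1)/2 respectively. Then p(x) is unimodal, with a peak at position n/2 if n is even, and at position (n−1)/2 or (n+1)/2 if n is odd. -/
open Polynomial

lemma incA {p : Polynomial ℝ} {m : ℕ} (hsym : SymmAbout p m) (huni : UnimodalPoly p m) :
    ∀ i j, i ≤ j → 2 * j ≤ m + 1 → p.coeff i ≤ p.coeff j := by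
  obtain ⟨k, hk, hinc, hdec⟩ := huni
  have A : ∀ i j, i ≤ j → 2 * j ≤ m → p.coeff i ≤ p.coeff j := by
    intro i j hij hj
    by_cases hjk : j ≤ k
    · exact hinc i j hij hjk
    · push_neg at hjk
      have h1 : p.coeff i = p.coeff (m - i) := hsym i (by omega)
      have h2 : p.coeff j = p.coeff (m - j) := hsym j (by omega)
      rw [h1, h2]
      exact hdec (m - j) (m - i) (by omega) (by omega) (by omega)
  intro i j hij hj
  by_cases h2j : 2 * j ≤ m
  · exact A i j hij h2j
  · have hm : 2 * j = m + 1 := by omega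
    rcases Nat.eq_or_lt_of_le hij with rfl | hlt
    · exact le_refl _
    · have h2 : p.coeff j = p.coeff (j - 1) := by
        have := hsym j (by omega)
        rwa [show m - j = j - 1 by omega] at this
      rw [h2]
      exact A i (j - 1) (by omega) (by omega)

lemma decB {p : Polynomial ℝ} {m : ℕ} (hpos : NonnegCoeffs p) (hdeg : p.natDegree ≤ m)
    (hsym : SymmAbout p m) (huni : UnimodalPoly p m) :
    ∀ i j, m ≤ 2 * i + 1 → i ≤ j → p.coeff j ≤ p.coeff i := by
  obtain ⟨k, hk, hinc, hdec⟩ := huni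
  have B : ∀ i j, m ≤ 2 * i → i ≤ j → p.coeff j ≤ p.coeff i := by
    intro i j hi hij
    by_cases hjm : j ≤ m
    · by_cases hki : k ≤ i
      · exact hdec i j hki hij hjm
      · push_neg at hki
        have h1 : p.coeff i = p.coeff (m - i) := hsym i (by omega)
        have h2 : p.coeff j = p.coeff (m - j) := hsym j (by omega)
        rw [h1, h2]
        exact hinc (m - j) (m - i) (by omega) (by omega)
    · have hz : p.coeff j = 0 := Polynomial.coeff_eq_zero_of_natDegree_lt (by omega)
      rw [hz]; exact hpos i
  intro i j hi hij
  by_cases h2i : m ≤ 2 * i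
  · exact B i j h2i hij
  · have hm : m = 2 * i + 1 := by omega
    rcases Nat.eq_or_lt_of_le hij with rfl | hlt
    · exact le_refl _
    · have h1 : p.coeff i = p.coeff (i + 1) := by
        have := hsym i (by omega)
        rwa [show m - i = i + 1 by omega] at this
      rw [h1]
      exact B (i + 1) j (by omega) (by omega)

/-- If `p`, of degree at most `n`, is a sum of three polynomials with
nonnegative, symmetric and unimodal coefficients, with centers of symmetry
`(n-1)/2`, `n/2` and `(n+1)/2` respectively, then `p` is unimodal with a peak
at `n/2` if `n` is even, and at `(n-1)/2` or `(n+1)/2` if `n` is odd. -/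
theorem unimodal_of_three_symmetric_summands (n : ℕ) (p p₁ p₂ p₃ : Polynomial ℝ)
    (hpdeg : p.natDegree ≤ n) (hsum : p = p₁ + p₂ + p₃)
    (h₁deg : p₁.natDegree ≤ n - 1) (h₂deg : p₂.natDegree ≤ n) (h₃deg : p₃.natDegree ≤ n + 1)
    (h₁pos : NonnegCoeffs p₁) (h₂pos : NonnegCoeffs p₂) (h₃pos : NonnegCoeffs p₃)
    (h₁sym : SymmAbout p₁ (n - 1)) (h₂sym : SymmAbout p₂ n) (h₃sym : SymmAbout p₃ (n + 1))
    (h₁uni : UnimodalPoly p₁ (n - 1)) (h₂uni : UnimodalPoly p₂ n)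
    (h₃uni : UnimodalPoly p₃ (n + 1)) :
    if Even n then UnimodalWithPeak p (n / 2) n
    else UnimodalWithPeak p ((n - 1) / 2) n ∨ UnimodalWithPeak p ((n + 1) / 2) n := by
  have A1 := incA h₁sym h₁uni
  have A2 := incA h₂sym h₂uni
  have A3 := incA h₃sym h₃uni
  have B1 := decB h₁pos h₁deg h₁sym h₁uni
  have B2 := decB h₂pos h₂deg h₂sym h₂uni
  have B3 := decB h₃pos h₃deg h₃sym h₃uni
  have hc : ∀ i, p.coeff i = p₁.coeff i + p₂.coeff i + p₃.coeff i := by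
    intro i; simp [hsum]
  split_ifs with hn
  · -- even case: peak at n/2
    have he : n % 2 = 0 := Nat.even_iff.mp hn
    constructor
    · intro i j hij hj
      rw [hc i, hc j]
      exact add_le_add (add_le_add (A1 i j hij (by omega)) (A2 i j hij (by omega)))
        (A3 i j hij (by omega))
    · intro i j hi hij hj
      rw [hc i, hc j]
      exact add_le_add (add_le_add (B1 i j (by omega) hij) (B2 i j (by omega) hij))
        (B3 i j (by omega) hij)
  · -- odd case
    have ho : n % 2 = 1 := Nat.not_even_iff.mp hn
    have hstep : (n - 1) / 2 + 1 = (n + 1) / 2 := by omega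
    rcases le_total (p.coeff ((n + 1) / 2)) (p.coeff ((n - 1) / 2)) with hba | hab
    · left
      constructor
      · intro i j hij hj
        rw [hc i, hc j]
        exact add_le_add (add_le_add (A1 i j hij (by omega)) (A2 i j hij (by omega)))
          (A3 i j hij (by omega))
      · intro i j hi hij hj
        rcases Nat.eq_or_lt_of_le hi with rfl | hlt
        · rcases Nat.eq_or_lt_of_le hij with rfl | hlt2
          · exact le_refl _
          · refine le_trans (le_trans ?_ hba) (le_refl _)
            rw [hc j, hc ((n + 1) / 2)]
            exact add_le_add (add_le_add (B1 _ j (by omega) (by omega))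
              (B2 _ j (by omega) (by omega))) (B3 _ j (by omega) (by omega))
        · rw [hc i, hc j]
          exact add_le_add (add_le_add (B1 i j (by omega) hij) (B2 i j (by omega) hij))
            (B3 i j (by omega) hij)
    · right
      constructor
      · intro i j hij hj
        by_cases hjq : j ≤ (n - 1) / 2
        · rw [hc i, hc j]
          exact add_le_add (add_le_add (A1 i j hij (by omega)) (A2 i j hij (by omega)))
            (A3 i j hij (by omega))
        · have hjr : j = (n + 1) / 2 := by omega
          subst hjr
          rcases Nat.eq_or_lt_of_le hij with rfl | hlt
          · exact le_refl _
          · refine le_trans ?_ hab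
            rw [hc i, hc ((n - 1) / 2)]
            exact add_le_add (add_le_add (A1 i _ (by omega) (by omega))
              (A2 i _ (by omega) (by omega))) (A3 i _ (by omega) (by omega))
      · intro i j hi hij hj
        rw [hc i, hc j]
        exact add_le_add (add_le_add (B1 i j (by omega) hij) (B2 i j (by omega) hij))
          (B3 i j (by omega) hij)
end

section
/- If p(x) is a real-rooted polynomial with nonnegative coefficients that is symmetric with center of symmetry n/2 (where n = deg p), then p(x) is γ-positive. -/
open Polynomial Finset

/-- A real polynomial is real-rooted if every (complex) root of it is real,
or it is identically zero. -/
def RealRooted (p : Polynomial ℝ) : Prop :=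
  p = 0 ∨ ∀ z : ℂ, Polynomial.aeval z p = 0 → z.im = 0

/-- `p` is γ-positive with center of symmetry `n/2`. -/
def GammaPos (p : Polynomial ℝ) (n : ℕ) : Prop :=
  ∃ γ : ℕ → ℝ, (∀ i, 0 ≤ γ i) ∧
    p = ∑ i ∈ Finset.range (n / 2 + 1), Polynomial.C (γ i) * X ^ i * (1 + X) ^ (n - 2 * i)

/-- γ-positivity is closed under products (with centers adding). -/
lemma gammaPos_mul {p q : Polynomial ℝ} {n m : ℕ} (hp : GammaPos p n) (hq : GammaPos q m) :
    GammaPos (p * q) (n + m) := by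
  obtain ⟨γ, hγ, rfl⟩ := hp
  obtain ⟨δ, hδ, rfl⟩ := hq
  refine ⟨fun k => ∑ i ∈ range (n / 2 + 1), ∑ j ∈ range (m / 2 + 1),
      if i + j = k then γ i * δ j else 0, ?_, ?_⟩
  · intro k
    refine Finset.sum_nonneg fun i _ => Finset.sum_nonneg fun j _ => ?_
    split
    · exact mul_nonneg (hγ i) (hδ j)
    · exact le_refl 0
  · rw [Finset.sum_mul_sum]
    symm
    calc
      ∑ k ∈ range ((n + m) / 2 + 1),
          C (∑ i ∈ range (n / 2 + 1), ∑ j ∈ range (m / 2 + 1),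
            if i + j = k then γ i * δ j else 0) * X ^ k * (1 + X) ^ (n + m - 2 * k)
        = ∑ k ∈ range ((n + m) / 2 + 1), ∑ i ∈ range (n / 2 + 1), ∑ j ∈ range (m / 2 + 1),
            (if i + j = k then
              C (γ i * δ j) * X ^ (i + j) * (1 + X) ^ (n + m - 2 * (i + j)) else 0) := by
          refine Finset.sum_congr rfl fun k _ => ?_
          rw [map_sum, Finset.sum_mul, Finset.sum_mul]
          refine Finset.sum_congr rfl fun i _ => ?_
          rw [map_sum, Finset.sum_mul, Finset.sum_mul]
          refine Finset.sum_congr rfl fun j _ => ?_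
          by_cases h : i + j = k
          · subst h; simp
          · simp [h]
      _ = ∑ i ∈ range (n / 2 + 1), ∑ j ∈ range (m / 2 + 1),
            ∑ k ∈ range ((n + m) / 2 + 1),
            (if i + j = k then
              C (γ i * δ j) * X ^ (i + j) * (1 + X) ^ (n + m - 2 * (i + j)) else 0) := by
          rw [Finset.sum_comm]
          exact Finset.sum_congr rfl fun i _ => Finset.sum_comm
      _ = ∑ i ∈ range (n / 2 + 1), ∑ j ∈ range (m / 2 + 1),
            C (γ i * δ j) * X ^ (i + j) * (1 + X) ^ (n + m - 2 * (i + j)) := by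
          refine Finset.sum_congr rfl fun i hi => Finset.sum_congr rfl fun j hj => ?_
          rw [Finset.sum_ite_eq]
          simp only [Finset.mem_range] at hi hj ⊢
          rw [if_pos (by omega)]
      _ = ∑ i ∈ range (n / 2 + 1), ∑ j ∈ range (m / 2 + 1),
            C (γ i) * X ^ i * (1 + X) ^ (n - 2 * i) *
              (C (δ j) * X ^ j * (1 + X) ^ (m - 2 * j)) := by
          refine Finset.sum_congr rfl fun i hi => Finset.sum_congr rfl fun j hj => ?_
          simp only [Finset.mem_range] at hi hj
          have h1 : n + m - 2 * (i + j) = (n - 2 * i) + (m - 2 * j) := by omega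
          rw [h1, map_mul, pow_add, pow_add]
          ring

lemma gammaPos_C {a : ℝ} (ha : 0 ≤ a) : GammaPos (Polynomial.C a) 0 :=
  ⟨fun _ => a, fun _ => ha, by simp⟩

lemma gammaPos_one_add_X : GammaPos (1 + X) 1 :=
  ⟨fun _ => 1, fun _ => zero_le_one, by norm_num⟩

lemma gammaPos_quad {c : ℝ} (hc : 0 ≤ c) : GammaPos ((1 + X) ^ 2 + Polynomial.C c * X) 2 :=
  ⟨fun i => if i = 0 then 1 else c,
   fun i => by dsimp only; split <;> [exact zero_le_one; exact hc],
   by norm_num [Finset.sum_range_succ]⟩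

lemma quad_factor {r : ℝ} (hr : r < 0) :
    (X - Polynomial.C r) * (X - Polynomial.C r⁻¹) =
      (1 + X) ^ 2 + Polynomial.C (-(r + r⁻¹) - 2) * X := by
  have h1 : Polynomial.C r * Polynomial.C r⁻¹ = 1 := by
    rw [← C_mul, mul_inv_cancel₀ hr.ne, C_1]
  have h2 : Polynomial.C (-(r + r⁻¹) - 2) =
      -(Polynomial.C r + Polynomial.C r⁻¹) - 2 := by
    simp [map_sub, map_neg, map_add, map_ofNat]
  rw [h2]
  linear_combination h1

lemma quad_coeff_nonneg {r : ℝ} (hr : r < 0) : 0 ≤ -(r + r⁻¹) - 2 := by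
  have h1 : r * r⁻¹ = 1 := mul_inv_cancel₀ hr.ne
  nlinarith [sq_nonneg (r + 1), h1]

/-- The main combinatorial lemma: a product of linear factors with negative roots,
whose root multiset is inverse-invariant, is γ-positive. -/
lemma gammaPos_multiset : ∀ N : ℕ, ∀ S : Multiset ℝ, Multiset.card S = N →
    (∀ r ∈ S, r < 0) → S.map (·⁻¹) = S →
    GammaPos ((S.map fun r => X - Polynomial.C r).prod) N := by
  intro N
  induction N using Nat.strong_induction_on with
  | _ N ih =>
  intro S hcard hneg hinv
  rcases eq_or_ne S 0 with hS | hS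
  · subst hS
    simp only [Multiset.card_zero] at hcard
    subst hcard
    exact ⟨fun _ => 1, fun _ => zero_le_one, by simp⟩
  · obtain ⟨r, hr⟩ := Multiset.exists_mem_of_ne_zero hS
    have hr0 : r ≠ 0 := (hneg r hr).ne
    have hNpos : 0 < N := by
      rw [← hcard]
      exact Multiset.card_pos.mpr hS
    by_cases hr1 : r = -1
    · -- factor out a single (X + 1)
      set T := S.erase r with hTdef
      have hT : r ::ₘ T = S := Multiset.cons_erase hr
      have hcardT : Multiset.card T = N - 1 := by
        rw [hTdef, Multiset.card_erase_of_mem hr, hcard]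
        rfl
      have hnegT : ∀ s ∈ T, s < 0 := fun s hs => hneg s (Multiset.mem_of_mem_erase hs)
      have hinvT : T.map (·⁻¹) = T := by
        rw [hTdef, Multiset.map_erase _ inv_injective, hinv]
        congr 1
        rw [hr1]
        norm_num
      have hgp := ih (N - 1) (by omega) T hcardT hnegT hinvT
      have hprod : (S.map fun s => X - Polynomial.C s).prod =
          (X - Polynomial.C r) * (T.map fun s => X - Polynomial.C s).prod := by
        conv_lhs => rw [← hT]
        rw [Multiset.map_cons, Multiset.prod_cons]
      have hlin : GammaPos (X - Polynomial.C r) 1 := by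
        have : X - Polynomial.C r = 1 + X := by
          rw [hr1, map_neg, C_1]; ring
        rw [this]
        exact gammaPos_one_add_X
      have := gammaPos_mul hlin hgp
      rw [hprod]
      have hN1 : 1 + (N - 1) = N := by omega
      rwa [hN1] at this
    · -- pair r with r⁻¹
      have hrinv_mem : r⁻¹ ∈ S := by
        rw [← hinv]
        exact Multiset.mem_map_of_mem _ hr
      have hrne : r⁻¹ ≠ r := by
        intro h
        have h2 : r * r = 1 := by
          nth_rewrite 1 [← h]
          exact inv_mul_cancel₀ hr0
        have h3 : (r + 1) * (r - 1) = 0 := by linear_combination h2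
        rcases mul_eq_zero.mp h3 with h4 | h4
        · exact hr1 (by linarith)
        · have := hneg r hr; linarith
      have hrinv_mem' : r⁻¹ ∈ S.erase r := (Multiset.mem_erase_of_ne hrne).mpr hrinv_mem
      set T := (S.erase r).erase r⁻¹ with hTdef
      have hS2 : S = r ::ₘ r⁻¹ ::ₘ T := by
        rw [hTdef, Multiset.cons_erase hrinv_mem', Multiset.cons_erase hr]
      have hcardS : N = Multiset.card T + 2 := by
        rw [← hcard, hS2]
        simp
      have hnegT : ∀ s ∈ T, s < 0 := fun s hs =>
        hneg s (Multiset.mem_of_mem_erase (Multiset.mem_of_mem_erase hs))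
      have hinvT : T.map (·⁻¹) = T := by
        rw [hTdef, Multiset.map_erase _ inv_injective, Multiset.map_erase _ inv_injective,
          hinv, inv_inv, Multiset.erase_comm]
      have hgp := ih (N - 2) (by omega) T (by omega) hnegT hinvT
      have hquad : GammaPos ((X - Polynomial.C r) * (X - Polynomial.C r⁻¹)) 2 := by
        rw [quad_factor (hneg r hr)]
        exact gammaPos_quad (quad_coeff_nonneg (hneg r hr))
      have hprod : (S.map fun s => X - Polynomial.C s).prod =
          (X - Polynomial.C r) * (X - Polynomial.C r⁻¹) *
            (T.map fun s => X - Polynomial.C s).prod := by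
        rw [hS2, Multiset.map_cons, Multiset.prod_cons, Multiset.map_cons, Multiset.prod_cons,
          mul_assoc]
      have := gammaPos_mul hquad hgp
      rw [hprod]
      have hN2 : 2 + (N - 2) = N := by omega
      rwa [hN2] at this

/-- A real polynomial all of whose complex roots are real splits over ℝ. -/
lemma splits_of_im_zero : ∀ N : ℕ, ∀ p : Polynomial ℝ, p.natDegree ≤ N →
    (∀ z : ℂ, Polynomial.aeval z p = 0 → z.im = 0) → p.Splits
  | 0, p, hd, _ => Splits.of_natDegree_le_one (hd.trans (by norm_num))
  | (N + 1), p, hd, h => by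
    by_cases h1 : p.natDegree ≤ 1
    · exact Splits.of_natDegree_le_one h1
    · push_neg at h1
      have hp0 : p ≠ 0 := fun h0 => by simp [h0] at h1
      have hdeg : 0 < (p.map (algebraMap ℝ ℂ)).degree := by
        rw [degree_map_eq_of_injective (algebraMap ℝ ℂ).injective]
        exact natDegree_pos_iff_degree_pos.mp (by omega)
      obtain ⟨z, hz⟩ := Complex.exists_root hdeg
      have hzev : Polynomial.aeval z p = 0 := by
        rw [aeval_def, ← eval_map]
        exact hz
      have hzim : z.im = 0 := h z hzev
      have hzre : z = (z.re : ℂ) := Complex.ext rfl (by simp [hzim])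
      have hroot : p.IsRoot z.re := by
        have h2 : Polynomial.aeval ((algebraMap ℝ ℂ) z.re) p =
            (algebraMap ℝ ℂ) (p.eval z.re) := by
          rw [aeval_def, eval₂_at_apply]
        rw [show (algebraMap ℝ ℂ) z.re = z from (by rw [hzre]; rfl), hzev] at h2
        exact (map_eq_zero_iff _ (algebraMap ℝ ℂ).injective).mp h2.symm
      obtain ⟨q, hq⟩ := (dvd_iff_isRoot.mpr hroot)
      have hq0 : q ≠ 0 := fun h0 => hp0 (by rw [hq, h0, mul_zero])
      have hdq : q.natDegree ≤ N := by
        have := natDegree_mul (X_sub_C_ne_zero z.re) hq0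
        rw [← hq, natDegree_X_sub_C] at this
        omega
      have hqroots : ∀ w : ℂ, Polynomial.aeval w q = 0 → w.im = 0 := by
        intro w hw
        refine h w ?_
        rw [hq, map_mul, hw, mul_zero]
      rw [hq]
      exact splits_X_sub_C_mul_iff.mpr (splits_of_im_zero N q hdq hqroots)

lemma reverse_X_sub_C {r : ℝ} (hr : r ≠ 0) :
    (X - Polynomial.C r).reverse = Polynomial.C (-r) * (X - Polynomial.C r⁻¹) := by
  have h1 : (X - Polynomial.C r) = Polynomial.C 1 * X ^ 1 + Polynomial.C (-r) * X ^ 0 := by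
    rw [map_neg, C_1]; ring
  rw [reverse, natDegree_X_sub_C, h1, reflect_add, reflect_C_mul_X_pow, reflect_C_mul_X_pow,
    revAt_le (le_refl 1), revAt_le (Nat.zero_le 1)]
  have h2 : Polynomial.C r * Polynomial.C r⁻¹ = 1 := by
    rw [← C_mul, mul_inv_cancel₀ hr, C_1]
  rw [map_neg, C_1]
  linear_combination -h2

lemma reverse_prod_X_sub_C (S : Multiset ℝ) (hS : ∀ r ∈ S, r ≠ 0) :
    ((S.map fun r => X - Polynomial.C r).prod).reverse =
      Polynomial.C ((S.map fun r => -r).prod) *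
        ((S.map (·⁻¹)).map fun r => X - Polynomial.C r).prod := by
  induction S using Multiset.induction with
  | empty => simp [reverse]
  | cons r S ih =>
    simp only [Multiset.map_cons, Multiset.prod_cons]
    rw [reverse_mul_of_domain, reverse_X_sub_C (hS r (Multiset.mem_cons_self r S)),
      ih fun s hs => hS s (Multiset.mem_cons_of_mem hs), map_mul]
    ring

/-- A real-rooted polynomial with nonnegative coefficients which is symmetric
with center of symmetry `n/2`, where `n = deg p`, is γ-positive. -/
theorem gammaPos_of_realRooted_symmetric (p : Polynomial ℝ)
    (hroots : RealRooted p) (hpos : ∀ i, 0 ≤ p.coeff i)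
    (hsym : ∀ i ≤ p.natDegree, p.coeff i = p.coeff (p.natDegree - i)) :
    GammaPos p p.natDegree := by
  by_cases hp0 : p = 0
  · exact ⟨fun _ => 0, fun _ => le_refl 0, by simp [hp0]⟩
  have him : ∀ z : ℂ, Polynomial.aeval z p = 0 → z.im = 0 := hroots.resolve_left hp0
  set n := p.natDegree with hn
  -- the constant coefficient is positive
  have h0lc : p.coeff 0 = p.leadingCoeff := by
    rw [hsym 0 (Nat.zero_le n), Nat.sub_zero]
    rfl
  have h0pos : 0 < p.coeff 0 := by
    refine lt_of_le_of_ne (hpos 0) fun h => ?_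
    exact leadingCoeff_ne_zero.mpr hp0 (by rw [← h0lc, ← h])
  -- p splits over ℝ
  have hsplit : p.Splits := splits_of_im_zero p.natDegree p le_rfl him
  have hcard : Multiset.card p.roots = n := splits_iff_card_roots.mp hsplit
  have hfact := C_leadingCoeff_mul_prod_multiset_X_sub_C hcard
  -- all roots are negative
  have hneg : ∀ r ∈ p.roots, r < 0 := by
    intro r hr
    have hev : p.eval r = 0 := isRoot_of_mem_roots hr
    by_contra hc
    push_neg at hc
    have : 0 < p.eval r := by
      rw [eval_eq_sum_range]
      refine Finset.sum_pos' (fun i _ => mul_nonneg (hpos i) (pow_nonneg hc i)) ?_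
      exact ⟨0, Finset.mem_range.mpr (Nat.succ_pos _), by simpa using h0pos⟩
    rw [hev] at this
    exact lt_irrefl 0 this
  have hne0 : ∀ r ∈ p.roots, r ≠ 0 := fun r hr => (hneg r hr).ne
  -- p is equal to its own reverse
  have hrev : p.reverse = p := by
    ext i
    rw [coeff_reverse]
    by_cases h : i ≤ p.natDegree
    · rw [revAt_le h, ← hsym i h]
    · push_neg at h
      rw [revAt_eq_self_of_lt h]
  -- the root multiset is inverse-invariant
  have hinv : p.roots.map (·⁻¹) = p.roots := by
    have hb : p.leadingCoeff * (p.roots.map fun r => -r).prod ≠ 0 := by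
      refine mul_ne_zero (leadingCoeff_ne_zero.mpr hp0) ?_
      refine Multiset.prod_ne_zero fun h0 => ?_
      obtain ⟨r, hr, hr0⟩ := Multiset.mem_map.mp h0
      exact hne0 r hr (by linarith [neg_eq_zero.mp hr0])
    have key : p = Polynomial.C (p.leadingCoeff * (p.roots.map fun r => -r).prod) *
        ((p.roots.map (·⁻¹)).map fun r => X - Polynomial.C r).prod := by
      conv_lhs => rw [← hrev]
      conv_lhs => rw [← hfact]
      rw [reverse_mul_of_domain, reverse_C, reverse_prod_X_sub_C _ hne0, map_mul]
      ring
    calc p.roots.map (·⁻¹)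
        = (Polynomial.C (p.leadingCoeff * (p.roots.map fun r => -r).prod) *
            ((p.roots.map (·⁻¹)).map fun r => X - Polynomial.C r).prod).roots := by
          rw [roots_C_mul _ hb, roots_multiset_prod_X_sub_C]
      _ = p.roots := by rw [← key]
  -- assemble
  have hgp := gammaPos_multiset n p.roots hcard hneg hinv
  have hlc : (0:ℝ) ≤ p.leadingCoeff := by rw [← h0lc]; exact hpos 0
  have hfinal := gammaPos_mul (gammaPos_C hlc) hgp
  rw [zero_add, hfact] at hfinal
  exact hfinal
end
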